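/- Let 0 < α < β and let λ₁, λ₂ ∈ [α, β] satisfy αβ/(α + β - λ₁) ≤ λ₂ ≤ α + β - αβ/λ₁. Then there exists t ∈ [0,1] such that ν_t ≤ λ₁ ≤ λ₂ ≤ μ_t, 1/(λ₁-α) + 1/(λ₂-α) ≤ 1/(ν_t-α) + 1/(μ_t-α), and 1/(β-λ₁) + 1/(β-λ₂) ≤ 1/(β-ν_t) + 1/(β-μ_t) (with the convention 1/0 = +∞), where μ_t = tα+(1-t)β and ν_t = (t/α+(1-t)/β)^{-1}. -/

import Mathlib

/-!
Substitute `t = (s - α) / (β - α)`: then `μ_t = α + β - s` and `ν_t = α β / s`, and for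
`α < s < β` the two right-hand sums become `(s + α) / (α (β - s))`, increasing in `s`, and
`(s + β) / (β (s - α))`, decreasing in `s`. Take `s` making the first inequality an equality.
With `P = λ₁ λ₂ - α²` and `H₁, H₂ ≥ 0` the two hypotheses cleared of denominators, every remaining
constraint times `P` is manifestly nonnegative: `(s - α) P` is α times a sum of two
positive products, `(α + β - λ₂ - s) P = (λ₂ - α) H₂`, `(λ₁ s - α β) P = α (λ₁ - α) H₂`, and
the defect of the second inequality times `P` is `(β - α) H₁ H₂`. The boundary cases
`λ₁ = α` and `λ₂ = β` force `λ₁ = λ₂` and are realized by `t = 1` and `t = 0`, where the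
convention `1/0 = ∞` makes the reciprocal inequalities trivial.
-/

noncomputable section
open ENNReal

namespace GClosure

variable {α β s lam₁ lam₂ : ℝ}

def mu (α β t : ℝ) : ℝ := t * α + (1 - t) * β

def nu (α β t : ℝ) : ℝ := (t / α + (1 - t) / β)⁻¹

def Realizes (α β lam₁ lam₂ t : ℝ) : Prop :=
  nu α β t ≤ lam₁ ∧ lam₁ ≤ lam₂ ∧ lam₂ ≤ mu α β t ∧
    (ENNReal.ofReal (lam₁ - α))⁻¹ + (ENNReal.ofReal (lam₂ - α))⁻¹ ≤
      (ENNReal.ofReal (nu α β t - α))⁻¹ + (ENNReal.ofReal (mu α β t - α))⁻¹ ∧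
    (ENNReal.ofReal (β - lam₁))⁻¹ + (ENNReal.ofReal (β - lam₂))⁻¹ ≤
      (ENNReal.ofReal (β - nu α β t))⁻¹ + (ENNReal.ofReal (β - mu α β t))⁻¹

theorem realizes_one : Realizes α β α α 1 := by
  simp [Realizes, mu, nu]

theorem realizes_zero : Realizes α β β β 0 := by
  simp [Realizes, mu, nu]

theorem mu_reparam (hαβ : α ≠ β) : mu α β ((s - α) / (β - α)) = α + β - s := by
  have : β - α ≠ 0 := sub_ne_zero.2 hαβ.symm
  unfold mu; field_simp; ring

theorem nu_reparam (hα : α ≠ 0) (hβ : β ≠ 0) (hαβ : α ≠ β) :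
    nu α β ((s - α) / (β - α)) = α * β / s := by
  have : β - α ≠ 0 := sub_ne_zero.2 hαβ.symm
  rw [nu, inv_eq_iff_eq_inv, inv_div]
  field_simp
  ring

theorem ofReal_inv_add_ofReal_inv_le {a b c d : ℝ} (ha : 0 < a) (hb : 0 < b) (hc : 0 < c)
    (hd : 0 < d) (h : a⁻¹ + b⁻¹ ≤ c⁻¹ + d⁻¹) :
    (ENNReal.ofReal a)⁻¹ + (ENNReal.ofReal b)⁻¹ ≤ (ENNReal.ofReal c)⁻¹ + (ENNReal.ofReal d)⁻¹ := by
  rw [← ofReal_inv_of_pos ha, ← ofReal_inv_of_pos hb, ← ofReal_inv_of_pos hc,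
    ← ofReal_inv_of_pos hd, ← ofReal_add (by positivity) (by positivity),
    ← ofReal_add (by positivity) (by positivity)]
  exact ofReal_le_ofReal h

theorem inv_sub_add_inv_sub_of_mem_Ioo (hα : 0 < α) (has : α < s) (hsb : s < β) :
    (α * β / s - α)⁻¹ + (α + β - s - α)⁻¹ = (s + α) / (α * (β - s)) := by
  have : s ≠ 0 := by linarith
  have : β - s ≠ 0 := by linarith
  rw [show α * β / s - α = α * (β - s) / s by field_simp,
    show α + β - s - α = β - s by ring, inv_div]
  field_simp

theorem sub_inv_add_sub_inv_of_mem_Ioo (hα : 0 < α) (has : α < s) (hsb : s < β) :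
    (β - α * β / s)⁻¹ + (β - (α + β - s))⁻¹ = (s + β) / (β * (s - α)) := by
  have : s ≠ 0 := by linarith
  have : β ≠ 0 := by linarith
  have : s - α ≠ 0 := by linarith
  rw [show β - α * β / s = β * (s - α) / s by field_simp,
    show β - (α + β - s) = s - α by ring, inv_div]
  field_simp

theorem realizes_reparam (hα : 0 < α) (has : α < s) (hsb : s < β) (h₁ : α < lam₁)
    (hord : lam₁ ≤ lam₂) (h₂ : lam₂ < β) (hν : α * β ≤ lam₁ * s) (hμ : lam₂ ≤ α + β - s)
    (hsumα : α * (β - s) * (lam₁ - α + (lam₂ - α)) ≤ (s + α) * ((lam₁ - α) * (lam₂ - α)))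
    (hsumβ : β * (s - α) * (β - lam₁ + (β - lam₂)) ≤ (s + β) * ((β - lam₁) * (β - lam₂))) :
    Realizes α β lam₁ lam₂ ((s - α) / (β - α)) := by
  have hs : 0 < s := hα.trans has
  rw [Realizes, nu_reparam hα.ne' (hα.trans (has.trans hsb)).ne' (has.trans hsb).ne,
    mu_reparam (has.trans hsb).ne]
  refine ⟨div_le_of_le_mul₀ hs.le (by linarith) (by linarith), hord, hμ,
    ofReal_inv_add_ofReal_inv_le (by linarith) (by linarith) ?_ (by linarith) ?_,
    ofReal_inv_add_ofReal_inv_le (by linarith) (by linarith) ?_ (by linarith) ?_⟩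
  · exact sub_pos.2 ((lt_div_iff₀ hs).2 (by nlinarith))
  · rw [inv_sub_add_inv_sub_of_mem_Ioo hα has hsb, inv_add_inv (by linarith) (by linarith),
      div_le_div_iff₀ (by nlinarith) (by nlinarith)]
    linarith
  · exact sub_pos.2 ((div_lt_iff₀ hs).2 (by nlinarith))
  · rw [sub_inv_add_sub_inv_of_mem_Ioo hα has hsb, inv_add_inv (by linarith) (by linarith),
      div_le_div_iff₀ (by nlinarith) (by nlinarith)]
    linarith

theorem exists_realizes_of_lt (hα : 0 < α) (h₁ : α < lam₁) (hord : lam₁ ≤ lam₂) (h₂ : lam₂ < β)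
    (H₁ : α * β ≤ lam₂ * (α + β - lam₁)) (H₂ : α * β ≤ lam₁ * (α + β - lam₂)) :
    ∃ t ∈ Set.Icc (0 : ℝ) 1, Realizes α β lam₁ lam₂ t := by
  have hP : 0 < lam₁ * lam₂ - α ^ 2 := by nlinarith
  obtain ⟨s, hs⟩ : ∃ s, s * (lam₁ * lam₂ - α ^ 2) =
      α * ((α + β) * (lam₁ + lam₂) - lam₁ * lam₂ - 2 * α * β - α ^ 2) :=
    ⟨_, div_mul_cancel₀ _ hP.ne'⟩
  have hgap : 0 < (lam₁ - α) * (β - lam₂) + (β - lam₁) * (lam₂ - α) := by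
    have := mul_pos (sub_pos.2 h₁) (sub_pos.2 h₂)
    nlinarith
  have hα₁ : 0 ≤ lam₁ - α := by linarith
  have hα₂ : 0 ≤ lam₂ - α := by linarith
  have has : α < s := lt_of_mul_lt_mul_right (by linear_combination α * hgap - hs) hP.le
  have hμ : lam₂ ≤ α + β - s :=
    le_of_mul_le_mul_right (by linear_combination mul_le_mul_of_nonneg_left H₂ hα₂ + hs) hP
  have hν : α * β ≤ lam₁ * s :=
    le_of_mul_le_mul_right
      (by linear_combination mul_le_mul_of_nonneg_left H₂ (mul_nonneg hα.le hα₁) - lam₁ * hs) hP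
  have hH : 0 ≤ (lam₂ * (α + β - lam₁) - α * β) * (lam₁ * (α + β - lam₂) - α * β) :=
    mul_nonneg (sub_nonneg.2 H₁) (sub_nonneg.2 H₂)
  refine ⟨(s - α) / (β - α),
    ⟨div_nonneg (by linarith) (by linarith), div_le_one_of_le₀ (by linarith) (by linarith)⟩,
    realizes_reparam hα has (by linarith) h₁ hord h₂ hν hμ (by linear_combination -hs) ?_⟩
  have hβα : 0 ≤ β - α := by linarith
  exact le_of_mul_le_mul_right
    (by linear_combination mul_nonneg hβα hH - (lam₁ * lam₂ - β ^ 2) * hs) hP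

end GClosure

theorem gClosure_dim2_general (α β lam₁ lam₂ : ℝ) (hα : 0 < α)
    (hord : lam₁ ≤ lam₂)
    (h₁ : lam₁ ∈ Set.Icc α β) (h₂ : lam₂ ∈ Set.Icc α β)
    (hl : α * β / (α + β - lam₁) ≤ lam₂) (hr : lam₂ ≤ α + β - α * β / lam₁) :
    ∃ t ∈ Set.Icc (0 : ℝ) 1,
      (t / α + (1 - t) / β)⁻¹ ≤ lam₁ ∧ lam₁ ≤ lam₂ ∧ lam₂ ≤ t * α + (1 - t) * β ∧
      (ENNReal.ofReal (lam₁ - α))⁻¹ + (ENNReal.ofReal (lam₂ - α))⁻¹ ≤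
        (ENNReal.ofReal ((t / α + (1 - t) / β)⁻¹ - α))⁻¹ +
          (ENNReal.ofReal (t * α + (1 - t) * β - α))⁻¹ ∧
      (ENNReal.ofReal (β - lam₁))⁻¹ + (ENNReal.ofReal (β - lam₂))⁻¹ ≤
        (ENNReal.ofReal (β - (t / α + (1 - t) / β)⁻¹))⁻¹ +
          (ENNReal.ofReal (β - (t * α + (1 - t) * β)))⁻¹ := by
  obtain ⟨hα₁, hβ₁⟩ := h₁
  obtain ⟨hα₂, hβ₂⟩ := h₂
  have H₁ : α * β ≤ lam₂ * (α + β - lam₁) := (div_le_iff₀ (by linarith)).1 hl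
  have H₂ : α * β ≤ lam₁ * (α + β - lam₂) := (div_le_iff₀' (by linarith)).1 (by linarith)
  rcases hα₁.eq_or_lt with rfl | hα₁
  · obtain rfl : lam₂ = α := by nlinarith
    exact ⟨1, Set.right_mem_Icc.2 zero_le_one, GClosure.realizes_one⟩
  rcases hβ₂.eq_or_lt with rfl | hβ₂
  · obtain rfl : lam₁ = lam₂ := by nlinarith
    exact ⟨0, Set.left_mem_Icc.2 zero_le_one, GClosure.realizes_zero⟩
  exact GClosure.exists_realizes_of_lt hα hα₁ hord hβ₂ H₁ H₂

/-- two-dimensional G-closure characterization. If `0 < α < β` and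
`λ₁, λ₂ ∈ [α,β]` satisfy `αβ/(α+β-λ₁) ≤ λ₂ ≤ α+β-αβ/λ₁`, then there is `t ∈ [0,1]`
such that `ν_t ≤ λ₁ ≤ λ₂ ≤ μ_t` and the two reciprocal-sum inequalities hold (with the
convention `1/0 = +∞`, encoded in `ℝ≥0∞`), where `μ_t = tα+(1-t)β` and
`ν_t = (t/α+(1-t)/β)⁻¹`. -/
theorem gClosure_dim2 (α β lam₁ lam₂ : ℝ) (hα : 0 < α) (hαβ : α < β)
    (hord : lam₁ ≤ lam₂)
    (h₁ : lam₁ ∈ Set.Icc α β) (h₂ : lam₂ ∈ Set.Icc α β)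
    (hl : α * β / (α + β - lam₁) ≤ lam₂) (hr : lam₂ ≤ α + β - α * β / lam₁) :
    ∃ t ∈ Set.Icc (0 : ℝ) 1,
      (t / α + (1 - t) / β)⁻¹ ≤ lam₁ ∧ lam₁ ≤ lam₂ ∧ lam₂ ≤ t * α + (1 - t) * β ∧
      (ENNReal.ofReal (lam₁ - α))⁻¹ + (ENNReal.ofReal (lam₂ - α))⁻¹ ≤
        (ENNReal.ofReal ((t / α + (1 - t) / β)⁻¹ - α))⁻¹ +
          (ENNReal.ofReal (t * α + (1 - t) * β - α))⁻¹ ∧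
      (ENNReal.ofReal (β - lam₁))⁻¹ + (ENNReal.ofReal (β - lam₂))⁻¹ ≤
        (ENNReal.ofReal (β - (t / α + (1 - t) / β)⁻¹))⁻¹ +
          (ENNReal.ofReal (β - (t * α + (1 - t) * β)))⁻¹ :=
  gClosure_dim2_general α β lam₁ lam₂ hα hord h₁ h₂ hl hr
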